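/- Let N ≥ 3, 2 < p < 2 + 4/N < q < 2*, and let a, b, c, d > 0. Then the function l(t) = a t² − b t^{2*} − c t^{γ_p} − d t^{γ_q}, defined for t ∈ (0,∞), has at most two critical points; that is, the set {t > 0 : l'(t) = 0} has at most two elements. -/

import Mathlib

open Real

/-- `γ_s = N(s-2)/2`. -/
noncomputable def gam (N : ℕ) (s : ℝ) : ℝ := (N : ℝ) * (s - 2) / 2

/-- The critical Sobolev exponent `2* = 2N/(N-2)`. -/
noncomputable def twoStar (N : ℕ) : ℝ := 2 * (N : ℝ) / ((N : ℝ) - 2)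

/-!
For `t > 0` one has `l'(t) = t · G(t)` with
`G(t) = 2a - b α t^(α-2) - c β t^(β-2) - d δ t^(δ-2)`, and
`G'(t) = -t^(β-3) · (b α (α-2) t^(α-β) + d δ (δ-2) t^(δ-β) + c β (β-2))`.
When `α, δ > 2 > β` (here `α = 2*`, `δ = γ_q`, `β = γ_p`) and `b, d > 0`, the bracket is strictly
increasing in `t`, so `G'` vanishes at most once on `(0, ∞)`; by Rolle's theorem `G`, hence `l'`,
vanishes at most twice there.
-/

open Set

theorem Set.encard_le_two_of_forall_not_lt_lt {α : Type*} [LinearOrder α] {S : Set α}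
    (h : ∀ x ∈ S, ∀ y ∈ S, ∀ z ∈ S, x < y → y < z → False) : S.encard ≤ 2 := by
  rcases le_or_gt S.encard 1 with h1 | h1
  · exact h1.trans (by norm_num)
  obtain ⟨x, y, hx, hy, hxy⟩ := one_lt_encard_iff.1 h1
  wlog hlt : x < y generalizing x y
  · exact this y x hy hx hxy.symm (hxy.lt_or_gt.resolve_left hlt)
  refine (encard_le_encard fun z hz => ?_).trans (encard_pair hxy).le
  rcases lt_trichotomy z x with hzx | rfl | hxz
  · exact (h z hz x hx y hy hzx hlt).elim
  · exact Or.inl rfl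
  rcases lt_trichotomy z y with hzy | rfl | hyz
  · exact (h x hx z hz y hy hxz hzy).elim
  · exact Or.inr rfl
  · exact (h x hx y hy z hz hlt hyz).elim

theorem encard_zeros_le_two_of_subsingleton_zeros_deriv {f f' : ℝ → ℝ} {s : Set ℝ}
    (hs : s.OrdConnected) (hf : ∀ x ∈ s, HasDerivAt f (f' x) x)
    (hf' : {x ∈ s | f' x = 0}.Subsingleton) : {x ∈ s | f x = 0}.encard ≤ 2 := by
  have rolle : ∀ x ∈ s, ∀ y ∈ s, x < y → f x = 0 → f y = 0 →
      ∃ u ∈ Ioo x y, u ∈ s ∧ f' u = 0 := by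
    intro x hx y hy hxy hfx hfy
    have hIcc := hs.out hx hy
    obtain ⟨u, hu, hu0⟩ := exists_hasDerivAt_eq_zero hxy
      (fun z hz => (hf z (hIcc hz)).continuousAt.continuousWithinAt) (hfx.trans hfy.symm)
      (fun z hz => hf z (hIcc (Ioo_subset_Icc_self hz)))
    exact ⟨u, hu, hIcc (Ioo_subset_Icc_self hu), hu0⟩
  refine encard_le_two_of_forall_not_lt_lt fun x hx y hy z hz hxy hyz => ?_
  obtain ⟨u, hu, hus, hu0⟩ := rolle x hx.1 y hy.1 hxy hx.2 hy.2
  obtain ⟨v, hv, hvs, hv0⟩ := rolle y hy.1 z hz.1 hyz hy.2 hz.2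
  exact (hu.2.trans hv.1).ne (hf' ⟨hus, hu0⟩ ⟨hvs, hv0⟩)

section CriticalPoints

variable {a b c d α β δ t : ℝ}

theorem hasDerivAt_sub_four_powers (ht : 0 < t) :
    HasDerivAt (fun t : ℝ => a * t ^ 2 - b * t ^ α - c * t ^ β - d * t ^ δ)
      (t * (2 * a - b * α * t ^ (α - 2) - c * β * t ^ (β - 2) - d * δ * t ^ (δ - 2))) t := by
  have hpow (e : ℝ) := (hasDerivAt_rpow_const (p := e) (Or.inl ht.ne'))
  refine ((((hasDerivAt_pow 2 t).const_mul a).sub ((hpow α).const_mul b)).sub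
    ((hpow β).const_mul c)).sub ((hpow δ).const_mul d) |>.congr_deriv ?_
  have hsplit (e : ℝ) : t ^ (e - 1) = t * t ^ (e - 2) := by
    rw [show e - 1 = 1 + (e - 2) by ring, rpow_add ht, rpow_one]
  rw [hsplit α, hsplit β, hsplit δ]
  ring

theorem hasDerivAt_two_mul_sub_three_powers (ht : 0 < t) :
    HasDerivAt
      (fun t : ℝ => 2 * a - b * α * t ^ (α - 2) - c * β * t ^ (β - 2) - d * δ * t ^ (δ - 2))
      (-(t ^ (β - 3) * (b * α * (α - 2) * t ^ (α - β) + d * δ * (δ - 2) * t ^ (δ - β)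
        + c * β * (β - 2)))) t := by
  have hpow (e : ℝ) := (hasDerivAt_rpow_const (p := e - 2) (Or.inl ht.ne'))
  refine ((((hasDerivAt_const t (2 * a)).sub ((hpow α).const_mul (b * α))).sub
    ((hpow β).const_mul (c * β))).sub ((hpow δ).const_mul (d * δ))) |>.congr_deriv ?_
  have hsplit (e : ℝ) : t ^ (e - 2 - 1) = t ^ (β - 3) * t ^ (e - β) := by
    rw [← rpow_add ht]
    ring_nf
  rw [hsplit α, hsplit β, hsplit δ, sub_self, rpow_zero]
  ring

theorem encard_pos_zeros_deriv_sub_four_powers_le_two (hb : 0 < b) (hd : 0 < d) (hα : 2 < α)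
    (hδ : 2 < δ) (hβα : β < α) (hβδ : β < δ) :
    {t : ℝ | 0 < t ∧
      deriv (fun t : ℝ => a * t ^ 2 - b * t ^ α - c * t ^ β - d * t ^ δ) t = 0}.encard ≤ 2 := by
  set P : ℝ → ℝ := fun t => b * α * (α - 2) * t ^ (α - β) + d * δ * (δ - 2) * t ^ (δ - β)
    + c * β * (β - 2)
  have hP : StrictMonoOn P (Ioi 0) := by
    intro s hs t _ hst
    have hbα : 0 < b * α * (α - 2) := mul_pos (mul_pos hb (by linarith)) (by linarith)
    have hdδ : 0 < d * δ * (δ - 2) := mul_pos (mul_pos hd (by linarith)) (by linarith)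
    have hα' := rpow_lt_rpow hs.le hst (sub_pos.2 hβα)
    have hδ' := rpow_lt_rpow hs.le hst (sub_pos.2 hβδ)
    simp only [P]
    gcongr
  calc _ ≤ {t ∈ Ioi 0 | 2 * a - b * α * t ^ (α - 2) - c * β * t ^ (β - 2)
        - d * δ * t ^ (δ - 2) = 0}.encard := by
        refine encard_le_encard fun t ⟨ht, hcrit⟩ => ⟨ht, ?_⟩
        rw [(hasDerivAt_sub_four_powers ht).deriv] at hcrit
        exact (mul_eq_zero.1 hcrit).resolve_left ht.ne'
    _ ≤ 2 := by
        refine encard_zeros_le_two_of_subsingleton_zeros_deriv ordConnected_Ioi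
          (fun t ht => hasDerivAt_two_mul_sub_three_powers ht) ?_
        rintro s ⟨hs, hs0⟩ t ⟨ht, ht0⟩
        refine hP.injOn hs ht ?_
        rw [neg_eq_zero, mul_eq_zero] at hs0 ht0
        exact (hs0.resolve_left (rpow_pos_of_pos hs _).ne').trans
          (ht0.resolve_left (rpow_pos_of_pos ht _).ne').symm

end CriticalPoints

theorem two_lt_twoStar {N : ℕ} (hN : 3 ≤ N) : 2 < twoStar N := by
  have hN : (3 : ℝ) ≤ N := by exact_mod_cast hN
  rw [twoStar, lt_div_iff₀ (by linarith)]
  linarith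

theorem gam_lt_two_iff {N : ℕ} (hN : 0 < N) {s : ℝ} : gam N s < 2 ↔ s < 2 + 4 / N := by
  have hN : (0 : ℝ) < N := by exact_mod_cast hN
  rw [gam, div_lt_iff₀ two_pos, ← sub_lt_iff_lt_add', lt_div_iff₀ hN]
  constructor <;> intro h <;> linarith

theorem two_lt_gam_iff {N : ℕ} (hN : 0 < N) {s : ℝ} : 2 < gam N s ↔ 2 + 4 / N < s := by
  have hN : (0 : ℝ) < N := by exact_mod_cast hN
  rw [gam, lt_div_iff₀ two_pos, ← lt_sub_iff_add_lt', div_lt_iff₀ hN]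
  constructor <;> intro h <;> linarith

theorem stmt_3_general (N : ℕ) (hN : 3 ≤ N) (p q : ℝ)
    (hpN : p < 2 + 4 / (N : ℝ)) (hNq : 2 + 4 / (N : ℝ) < q) (a b c d : ℝ)
    (hb : 0 < b) (hd : 0 < d) :
    {t : ℝ | 0 < t ∧
      deriv (fun t : ℝ => a * t ^ 2 - b * t ^ (twoStar N)
        - c * t ^ (gam N p) - d * t ^ (gam N q)) t = 0}.encard ≤ 2 := by
  have hN0 : 0 < N := by omega
  have hp2 : gam N p < 2 := (gam_lt_two_iff hN0).2 hpN
  have hq2 : 2 < gam N q := (two_lt_gam_iff hN0).2 hNq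
  have hA2 : 2 < twoStar N := two_lt_twoStar hN
  exact encard_pos_zeros_deriv_sub_four_powers_le_two hb hd hA2 hq2 (hp2.trans hA2)
    (hp2.trans hq2)

theorem stmt_3 (N : ℕ) (hN : 3 ≤ N) (p q : ℝ)
    (hp : 2 < p) (hpN : p < 2 + 4 / (N : ℝ)) (hNq : 2 + 4 / (N : ℝ) < q)
    (hq : q < twoStar N) (a b c d : ℝ)
    (ha : 0 < a) (hb : 0 < b) (hc : 0 < c) (hd : 0 < d) :
    {t : ℝ | 0 < t ∧
      deriv (fun t : ℝ => a * t ^ 2 - b * t ^ (twoStar N)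
        - c * t ^ (gam N p) - d * t ^ (gam N q)) t = 0}.encard ≤ 2 :=
  stmt_3_general N hN p q hpN hNq a b c d hb hd
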